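/- arXiv:2108.09845 — 2 statements merged into one kernel-verified Lean document; each statement's English description precedes it below -/
import Mathlib

section
/- Let A ⊆ ℝ² be a Lebesgue-measurable set with positive Lebesgue measure. Then A contains the three vertices of a (nondegenerate) equilateral triangle; that is, there exist points x₀, x₁, x₂ ∈ A with x₀ ≠ x₁ and dist(x₀,x₁) = dist(x₀,x₂) = dist(x₁,x₂). -/
/-!
Take a Lebesgue density point `x` of `A` and a ball `K` around it in which `A` has density
more than `1/2`. The rotation `R` by `π/3` about `x` preserves Lebesgue measure and maps `K`
into itself, so `K ∩ A` and `K ∩ R⁻¹ A` overlap in a set of positive measure. Any point `y ≠ x`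
of the overlap gives the equilateral triangle `x, y, R y` inside `A`.
-/

open MeasureTheory Metric Set Filter Topology Real
open scoped ENNReal

theorem MeasureTheory.MeasurePreserving.measure_inter_inter_preimage_pos
    {α : Type*} [MeasurableSpace α] {μ : Measure α} {f : α → α} (hf : MeasurePreserving f μ μ)
    {s B : Set α} (hs : MapsTo f s s) (h : 2 * μ (s \ B) < μ s) :
    0 < μ (s ∩ B ∩ f ⁻¹' B) := by
  have hcover : s ⊆ (s ∩ B ∩ f ⁻¹' B) ∪ (s \ B) ∪ f ⁻¹' (s \ B) := by
    intro z hz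
    by_cases hzB : z ∈ B
    · by_cases hfzB : f z ∈ B
      · exact Or.inl (Or.inl ⟨⟨hz, hzB⟩, hfzB⟩)
      · exact Or.inr ⟨hs hz, hfzB⟩
    · exact Or.inl (Or.inr ⟨hz, hzB⟩)
  refine pos_iff_ne_zero.2 fun h0 => h.not_ge ?_
  calc μ s ≤ μ (s ∩ B ∩ f ⁻¹' B) + μ (s \ B) + μ (f ⁻¹' (s \ B)) :=
        (measure_mono hcover).trans <| (measure_union_le _ _).trans <|
          add_le_add_left (measure_union_le _ _) _
    _ ≤ 0 + μ (s \ B) + μ (s \ B) := by grw [h0, hf.measure_preimage_le]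
    _ = 2 * μ (s \ B) := by rw [zero_add, two_mul]

section Density

variable {β : Type*} [MetricSpace β] [MeasurableSpace β] [BorelSpace β] [SecondCountableTopology β]
  [HasBesicovitchCovering β] {μ : Measure β} [IsLocallyFiniteMeasure μ] {B : Set β}

theorem Besicovitch.exists_mem_two_mul_measure_closedBall_diff_lt (hB : MeasurableSet B)
    (hμB : μ B ≠ 0) : ∃ x ∈ B, ∃ r, 2 * μ (closedBall x r \ B) < μ (closedBall x r) := by
  obtain ⟨x, hxB, hx⟩ := Measure.exists_mem_of_measure_ne_zero_of_ae hμB <| ae_restrict_of_ae <|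
    Besicovitch.ae_tendsto_measure_inter_div_of_measurableSet μ hB
  rw [indicator_of_mem hxB] at hx
  obtain ⟨r, hr⟩ := (hx.eventually_const_lt (by norm_num : (2⁻¹ : ℝ≥0∞) < 1)).exists
  refine ⟨x, hxB, r, ?_⟩
  have hsplit : μ (B ∩ closedBall x r) + μ (closedBall x r \ B) = μ (closedBall x r) := by
    rw [inter_comm]; exact measure_inter_add_sdiff _ hB
  set a := μ (B ∩ closedBall x r)
  set d := μ (closedBall x r \ B)
  rw [ENNReal.lt_div_iff_mul_lt (.inr (by simp)) (.inr (by simp)), ← hsplit] at hr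
  have hlt : a + d < a + a := by
    calc a + d = 2 * (2⁻¹ * (a + d)) :=
          (ENNReal.mul_inv_cancel_left two_ne_zero ENNReal.ofNat_ne_top).symm
      _ < 2 * a := by gcongr; simp
      _ = a + a := two_mul a
  have ha : a ≠ ∞ := ne_top_of_le_ne_top (ne_top_of_lt hlt) le_self_add
  have hda : d < a := (ENNReal.add_lt_add_iff_left ha).1 hlt
  rw [← hsplit, two_mul]
  exact ENNReal.add_lt_add_right hda.ne_top hda

variable [NullSingletonClass μ]

theorem exists_mem_ne_mem_map_mem_of_measurePreserving (f : β → β → β)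
    (hf : ∀ x, MeasurePreserving (f x) μ μ) (hdist : ∀ x y, dist (f x y) x ≤ dist y x)
    (hB : MeasurableSet B) (hμB : μ B ≠ 0) : ∃ x ∈ B, ∃ y ∈ B, y ≠ x ∧ f x y ∈ B := by
  obtain ⟨x, hxB, r, hr⟩ := Besicovitch.exists_mem_two_mul_measure_closedBall_diff_lt hB hμB
  have hmaps : MapsTo (f x) (closedBall x r) (closedBall x r) := fun y hy =>
    (hdist x y).trans hy
  have hpos := (hf x).measure_inter_inter_preimage_pos hmaps hr
  rw [← measure_sdiff_null (measure_singleton x)] at hpos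
  obtain ⟨y, ⟨⟨-, hyB⟩, hfyB⟩, hyx⟩ := nonempty_of_measure_ne_zero hpos.ne'
  exact ⟨x, hxB, y, hyB, hyx, hfyB⟩

end Density

def ContainsEquilateralTriangle {X : Type*} [PseudoMetricSpace X] (A : Set X) : Prop :=
  ∃ x₀ ∈ A, ∃ x₁ ∈ A, ∃ x₂ ∈ A, x₀ ≠ x₁ ∧ dist x₀ x₁ = dist x₀ x₂ ∧ dist x₀ x₁ = dist x₁ x₂

theorem ContainsEquilateralTriangle.of_isometry_preimage {X Y : Type*} [MetricSpace X]
    [PseudoMetricSpace Y] {f : X → Y} (hf : Isometry f) {A : Set Y}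
    (h : ContainsEquilateralTriangle (f ⁻¹' A)) : ContainsEquilateralTriangle A := by
  obtain ⟨x₀, h₀, x₁, h₁, x₂, h₂, hne, hd₁, hd₂⟩ := h
  exact ⟨f x₀, h₀, f x₁, h₁, f x₂, h₂, hf.injective.ne hne, by simpa only [hf.dist_eq],
    by simpa only [hf.dist_eq]⟩

namespace Complex

theorem norm_one_sub_exp_pi_div_three : ‖1 - (Circle.exp (π / 3) : ℂ)‖ = 1 := by
  -- `exp (iπ/3)` has real part `1/2`
  have hconj : 1 - (Circle.exp (π / 3) : ℂ) = starRingEnd ℂ (Circle.exp (π / 3)) := by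
    apply Complex.ext <;> simp [Circle.coe_exp, Complex.exp_re, Complex.exp_im]
    norm_num
  rw [hconj, Complex.norm_conj, Circle.norm_coe]

theorem measurePreserving_rotateAbout (ω : Circle) (x : ℂ) :
    MeasurePreserving (fun y => x + ω * (y - x)) :=
  (measurePreserving_add_left volume x).comp <|
    (rotation ω).measurePreserving.comp (measurePreserving_sub_right volume x)

theorem dist_rotateAbout_left (ω x y : ℂ) : dist (x + ω * (y - x)) x = ‖ω‖ * dist y x := by
  rw [dist_eq_norm, dist_eq_norm, ← norm_mul]
  ring_nf

theorem dist_rotateAbout_right (ω x y : ℂ) : dist y (x + ω * (y - x)) = ‖1 - ω‖ * dist y x := by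
  rw [dist_eq_norm, dist_eq_norm, ← norm_mul]
  ring_nf

theorem containsEquilateralTriangle_of_measure_ne_zero {B : Set ℂ} (hB : MeasurableSet B)
    (hB₀ : volume B ≠ 0) : ContainsEquilateralTriangle B := by
  set ω := Circle.exp (π / 3)
  obtain ⟨x, hxB, y, hyB, hyx, hRyB⟩ := exists_mem_ne_mem_map_mem_of_measurePreserving
    (fun x y : ℂ => x + ω * (y - x)) (measurePreserving_rotateAbout ω)
    (fun x y => by rw [dist_rotateAbout_left, Circle.norm_coe, one_mul]) hB hB₀
  refine ⟨x, hxB, y, hyB, _, hRyB, hyx.symm, ?_, ?_⟩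
  · rw [dist_comm x, dist_comm x, dist_rotateAbout_left, Circle.norm_coe, one_mul]
  · rw [dist_comm x, dist_rotateAbout_right, norm_one_sub_exp_pi_div_three, one_mul]

end Complex

/-- Every Lebesgue-measurable subset of the plane with positive measure
contains the three vertices of a nondegenerate equilateral triangle. -/
theorem nonnull_contains_equilateral_triangle
    (A : Set (EuclideanSpace ℝ (Fin 2))) (hA : MeasurableSet A) (hpos : 0 < volume A) :
    ∃ x₀ ∈ A, ∃ x₁ ∈ A, ∃ x₂ ∈ A,
      x₀ ≠ x₁ ∧ dist x₀ x₁ = dist x₀ x₂ ∧ dist x₀ x₁ = dist x₁ x₂ := by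
  let e := Complex.orthonormalBasisOneI.repr
  refine ContainsEquilateralTriangle.of_isometry_preimage e.isometry <|
    Complex.containsEquilateralTriangle_of_measure_ne_zero (hA.preimage e.continuous.measurable) ?_
  rw [e.measurePreserving.measure_preimage hA.nullMeasurableSet]
  exact hpos.ne'
end

section
/- Assume the Continuum Hypothesis (the cardinality of ℝ equals ℵ₁). Let n ≥ 2. Then there exists a function c : ℝⁿ → ℕ such that no rectangle is monochromatic: there is no rectangle (x₀, x₁, x₂, x₃) in ℝⁿ with c(x₀) = c(x₁) = c(x₂) = c(x₃). In other words, the hypergraph Γₙ of rectangles on ℝⁿ has countable chromatic number. -/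
/-- A rectangle in `ℝⁿ`: a 4-tuple of points listed in cyclic order with
`x₁ - x₀ = x₂ - x₃`, adjacent edges at `x₀` orthogonal, and nondegenerate. -/
def IsRectangle {n : ℕ} (x₀ x₁ x₂ x₃ : EuclideanSpace ℝ (Fin n)) : Prop :=
  x₁ - x₀ = x₂ - x₃ ∧ (inner ℝ (x₁ - x₀) (x₃ - x₀) : ℝ) = 0 ∧ x₁ ≠ x₀ ∧ x₃ ≠ x₀

/-! Fix an injection `ι` of the group into `ω₁`. The ℤ-spans of the preimages of the initial
segments of `ω₁` form an increasing chain of countable subgroups; colour `v` through an injection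
into `ℕ` of the first of them containing `v`. Two points of one colour then lie in different
levels of the chain, so in a finite monochromatic set the point of highest level is not in the
span of the others. But each vertex of a parallelogram `x₀ + x₂ = x₁ + x₃` lies in the ℤ-span of
the other three, and a rectangle is a parallelogram with four distinct vertices. -/

open Cardinal Set Submodule

theorem Set.Countable.submoduleSpan {R M : Type*} [Semiring R] [Countable R] [AddCommMonoid M]
    [Module R M] {s : Set M} (hs : s.Countable) : (span R s : Set M).Countable := by
  have := hs.to_subtype
  rw [Finsupp.span_eq_range_linearCombination]
  exact countable_range _

namespace SpanLevel

variable (R : Type*) {M I : Type*} [Semiring R] [AddCommMonoid M] [Module R M] [LinearOrder I]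
  (ι : M → I)

def filtration (i : I) : Submodule R M := span R (ι ⁻¹' Iic i)

variable {R ι}

theorem filtration_mono {i j : I} (h : i ≤ j) : filtration R ι i ≤ filtration R ι j :=
  span_mono fun _ hx => le_trans hx h

theorem mem_filtration_self (v : M) : v ∈ filtration R ι (ι v) :=
  subset_span (le_refl (ι v))

theorem countable_filtration [Countable R] (hι : Function.Injective ι)
    (hI : ∀ i : I, (Iic i).Countable) (i : I) : (filtration R ι i : Set M).Countable :=
  ((hI i).preimage hι).submoduleSpan

variable [WellFoundedLT I]

variable (R ι) in
noncomputable def level (v : M) : I :=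
  wellFounded_lt.min {i | v ∈ filtration R ι i} ⟨ι v, mem_filtration_self v⟩

theorem mem_filtration_level (v : M) : v ∈ filtration R ι (level R ι v) :=
  wellFounded_lt.min_mem {i | v ∈ filtration R ι i} _

theorem level_le_of_mem_filtration {v : M} {i : I} (h : v ∈ filtration R ι i) :
    level R ι v ≤ i :=
  not_lt.mp (wellFounded_lt.not_lt_min {i | v ∈ filtration R ι i} h)

theorem level_le_of_mem_span {t : Set M} {v : M} {i : I} (hv : v ∈ span R t)
    (ht : ∀ w ∈ t, level R ι w ≤ i) : level R ι v ≤ i :=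
  level_le_of_mem_filtration <| span_le.mpr
    (fun w hw => filtration_mono (ht w hw) (mem_filtration_level w)) hv

end SpanLevel

open SpanLevel in
theorem exists_coloring_exists_notMem_span_diff_of_injective (R : Type*) {M I : Type*}
    [Semiring R] [Countable R] [AddCommMonoid M] [Module R M] [LinearOrder I] [WellFoundedLT I]
    (ι : M → I) (hι : Function.Injective ι) (hI : ∀ i : I, (Iic i).Countable) :
    ∃ c : M → ℕ, ∀ k : ℕ, ∀ s ⊆ c ⁻¹' {k}, s.Finite → s.Nontrivial →
      ∃ x ∈ s, x ∉ span R (s \ {x}) := by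
  choose f hf using fun i => countable_iff_exists_injOn.mp (countable_filtration (R := R) hι hI i)
  refine ⟨fun v => f (level R ι v) v, fun k s hs hfin hnt => ?_⟩
  have eq_of_level_eq {v w} (hv : v ∈ s) (hw : w ∈ s) (h : level R ι v = level R ι w) :
      v = w := by
    have hcw : f (level R ι v) w = k := h ▸ hs hw
    exact hf _ (mem_filtration_level v) (h ▸ mem_filtration_level w) ((hs hv).trans hcw.symm)
  obtain ⟨x, hxs, hx⟩ := exists_max_image s (level R ι) hfin hnt.nonempty
  obtain ⟨y, hy, hymax⟩ := exists_max_image (s \ {x}) (level R ι) hfin.sdiff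
    ((hnt.exists_ne x).imp fun _ ⟨h, hne⟩ => ⟨h, hne⟩)
  refine ⟨x, hxs, fun hspan => ?_⟩
  have hyx : level R ι y < level R ι x :=
    (hx y hy.1).lt_of_ne fun h => hy.2 (eq_of_level_eq hy.1 hxs h)
  exact hyx.not_ge (level_le_of_mem_span hspan hymax)

theorem exists_coloring_exists_notMem_span_diff_of_mk_le_aleph_one (R : Type*) {M : Type*}
    [Semiring R] [Countable R] [AddCommMonoid M] [Module R M] (hM : #M ≤ ℵ₁) :
    ∃ c : M → ℕ, ∀ k : ℕ, ∀ s ⊆ c ⁻¹' {k}, s.Finite → s.Nontrivial →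
      ∃ x ∈ s, x ∉ span R (s \ {x}) := by
  rw [← card_ord ℵ₁, ← mk_toType] at hM
  obtain ⟨ι⟩ := hM
  refine exists_coloring_exists_notMem_span_diff_of_injective R ι ι.injective fun i => ?_
  rw [← Iio_insert, countable_insert, ← le_aleph0_iff_set_countable, ← lt_aleph_one_iff]
  simpa using mk_Iio_lt i (by simp)

theorem mem_span_int_of_add_eq_add {G : Type*} [AddCommGroup G] {s : Set G} {a b c d : G}
    (h : a + b = c + d) (hb : b ∈ s) (hc : c ∈ s) (hd : d ∈ s) : a ∈ span ℤ s := by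
  rw [eq_sub_of_add_eq h]
  exact sub_mem (add_mem (subset_span hc) (subset_span hd)) (subset_span hb)

theorem exists_coloring_forall_parallelogram_not_monochromatic {G : Type*} [AddCommGroup G]
    (hG : #G ≤ ℵ₁) :
    ∃ c : G → ℕ, ∀ x₀ x₁ x₂ x₃ : G, x₀ + x₂ = x₁ + x₃ → x₀ ≠ x₁ → x₀ ≠ x₂ → x₀ ≠ x₃ → x₁ ≠ x₃ →
      ¬ (c x₀ = c x₁ ∧ c x₀ = c x₂ ∧ c x₀ = c x₃) := by
  obtain ⟨c, hc⟩ := exists_coloring_exists_notMem_span_diff_of_mk_le_aleph_one ℤ hG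
  refine ⟨c, fun x₀ x₁ x₂ x₃ h h01 h02 h03 h13 ⟨e1, e2, e3⟩ => ?_⟩
  have h12 : x₁ ≠ x₂ := fun h12 => h03 (add_right_cancel (h12 ▸ h.trans (add_comm _ _)))
  have h23 : x₂ ≠ x₃ := fun h23 => h01 (add_right_cancel (h23 ▸ h))
  obtain ⟨x, hx, hspan⟩ := hc (c x₀) {x₀, x₁, x₂, x₃}
    (by simp [insert_subset_iff, ← e1, ← e2, ← e3]) (toFinite _) (nontrivial_of_mem_mem_ne (by simp) (by simp) h01)
  apply hspan
  simp only [mem_insert_iff, mem_singleton_iff] at hx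
  rcases hx with rfl | rfl | rfl | rfl <;>
    [refine mem_span_int_of_add_eq_add h ?_ ?_ ?_;
     refine mem_span_int_of_add_eq_add h.symm ?_ ?_ ?_;
     refine mem_span_int_of_add_eq_add ((add_comm _ _).trans h) ?_ ?_ ?_;
     refine mem_span_int_of_add_eq_add ((add_comm _ _).trans h.symm) ?_ ?_ ?_] <;>
    simp [*, Ne.symm]

namespace IsRectangle

variable {n : ℕ} {x₀ x₁ x₂ x₃ : EuclideanSpace ℝ (Fin n)}

theorem add_eq_add (h : IsRectangle x₀ x₁ x₂ x₃) : x₀ + x₂ = x₁ + x₃ := by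
  have := h.1
  rw [sub_eq_sub_iff_add_eq_add] at this
  rw [add_comm, ← this, add_comm]

theorem ne₀₂ (h : IsRectangle x₀ x₁ x₂ x₃) : x₀ ≠ x₂ := by
  rintro rfl
  have h30 : x₃ - x₀ = -(x₁ - x₀) := by rw [h.1]; abel
  have := h.2.1
  rw [h30, inner_neg_right, neg_eq_zero, inner_self_eq_zero, sub_eq_zero] at this
  exact h.2.2.1 this

theorem ne₁₃ (h : IsRectangle x₀ x₁ x₂ x₃) : x₁ ≠ x₃ := by
  rintro rfl
  have := h.2.1
  rw [inner_self_eq_zero, sub_eq_zero] at this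
  exact h.2.2.1 this

end IsRectangle

theorem mk_euclideanSpace_le_mk_real (n : ℕ) : #(EuclideanSpace ℝ (Fin n)) ≤ #ℝ := by
  rw [mk_congr (WithLp.equiv 2 _), mk_arrow, lift_id, lift_id, mk_fin]
  exact_mod_cast power_nat_le (aleph0_le_mk ℝ)

theorem CH_implies_countable_chromatic_of_rectangles_general
    (CH : Cardinal.mk ℝ = Cardinal.aleph 1)
    (n : ℕ) :
    ∃ c : EuclideanSpace ℝ (Fin n) → ℕ,
      ∀ x₀ x₁ x₂ x₃ : EuclideanSpace ℝ (Fin n), IsRectangle x₀ x₁ x₂ x₃ →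
        ¬ (c x₀ = c x₁ ∧ c x₀ = c x₂ ∧ c x₀ = c x₃) := by
  obtain ⟨c, hc⟩ :=
    exists_coloring_forall_parallelogram_not_monochromatic (CH ▸ mk_euclideanSpace_le_mk_real n)
  exact ⟨c, fun x₀ x₁ x₂ x₃ h =>
    hc x₀ x₁ x₂ x₃ h.add_eq_add h.2.2.1.symm h.ne₀₂ h.2.2.2.symm h.ne₁₃⟩

/-- Under the Continuum Hypothesis, the hypergraph `Γₙ` of rectangles on
`ℝⁿ` has countable chromatic number: there is `c : ℝⁿ → ℕ` under which no rectangle is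
monochromatic. -/
theorem CH_implies_countable_chromatic_of_rectangles
    (CH : Cardinal.mk ℝ = Cardinal.aleph 1)
    (n : ℕ) (hn : 2 ≤ n) :
    ∃ c : EuclideanSpace ℝ (Fin n) → ℕ,
      ∀ x₀ x₁ x₂ x₃ : EuclideanSpace ℝ (Fin n), IsRectangle x₀ x₁ x₂ x₃ →
        ¬ (c x₀ = c x₁ ∧ c x₀ = c x₂ ∧ c x₀ = c x₃) :=
  CH_implies_countable_chromatic_of_rectangles_general CH n
end
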